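/- Let s, h, ℓ be positive integers and γ ≥ 1 a real number such that (h : ℝ) ≥ ℓ·γ^s·s^s. Let X and Y be finite sets and let E ⊆ X × Y be a nonempty set of pairs such that: (i) for every u ∈ X, the number of v ∈ Y with (u,v) ∈ E is at least h; (ii) for every v ∈ Y, the number of u ∈ X with (u,v) ∈ E is at least s; (iii) for every subset S ⊆ X with |S| = s, the number of common neighbors |{v ∈ Y : (u,v) ∈ E for all u ∈ S}| is at most ℓ. Then |E| ≥ γ·h·s. -/

import Mathlib

theorem stmt0 {X Y : Type*} [Fintype X] [Fintype Y] [DecidableEq X] [DecidableEq Y]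
    (s h ℓ : ℕ) (hs : 0 < s) (hh : 0 < h) (hℓ : 0 < ℓ)
    (γ : ℝ) (hγ : 1 ≤ γ)
    (hbound : (h : ℝ) ≥ (ℓ : ℝ) * γ ^ s * (s : ℝ) ^ s)
    (E : Finset (X × Y)) (hE : E.Nonempty)
    (hdegX : ∀ u : X, h ≤ (Finset.univ.filter fun v : Y => (u, v) ∈ E).card)
    (hdegY : ∀ v : Y, s ≤ (Finset.univ.filter fun u : X => (u, v) ∈ E).card)
    (hcommon : ∀ S : Finset X, S.card = s →
      (Finset.univ.filter fun v : Y => ∀ u ∈ S, (u, v) ∈ E).card ≤ ℓ) :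
    γ * h * s ≤ (E.card : ℝ) := by
  classical
  -- Step 1 : h * |X| ≤ |E|
  have hfiber : ∀ u : X, (E.filter fun p => p.1 = u).card
      = (Finset.univ.filter fun v : Y => (u, v) ∈ E).card := by
    intro u
    apply Finset.card_bij (fun p _ => p.2)
    · intro p hp
      simp only [Finset.mem_filter] at hp ⊢
      exact ⟨Finset.mem_univ _, by rw [← hp.2]; exact hp.1⟩
    · intro p hp q hq hpq
      simp only [Finset.mem_filter] at hp hq
      exact Prod.ext (hp.2.trans hq.2.symm) hpq
    · intro v hv
      simp only [Finset.mem_filter] at hv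
      exact ⟨(u, v), Finset.mem_filter.2 ⟨hv.2, rfl⟩, rfl⟩
  have hXcard : h * Fintype.card X ≤ E.card := by
    have := Finset.card_eq_sum_card_fiberwise
      (f := fun p : X × Y => p.1) (s := E) (t := Finset.univ)
      (fun p _ => Finset.mem_univ _)
    rw [this]
    calc h * Fintype.card X = ∑ _u : X, h := by
          rw [Finset.sum_const, smul_eq_mul, Finset.card_univ, mul_comm]
      _ ≤ ∑ u : X, (E.filter fun p => p.1 = u).card := by
          apply Finset.sum_le_sum
          intro u _
          rw [hfiber u]
          exact hdegX u
  -- Step 2 : |Y| ≤ ℓ * |X| ^ s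
  have hYsub : (Finset.univ : Finset Y) ⊆
      (Finset.powersetCard s (Finset.univ : Finset X)).biUnion
        (fun S => Finset.univ.filter fun v : Y => ∀ u ∈ S, (u, v) ∈ E) := by
    intro v _
    obtain ⟨S, hSsub, hScard⟩ := Finset.exists_subset_card_eq
      (s := Finset.univ.filter fun u : X => (u, v) ∈ E) (n := s) (hdegY v)
    refine Finset.mem_biUnion.2 ⟨S, ?_, ?_⟩
    · exact Finset.mem_powersetCard.2 ⟨Finset.subset_univ _, hScard⟩
    · refine Finset.mem_filter.2 ⟨Finset.mem_univ _, fun u hu => ?_⟩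
      exact (Finset.mem_filter.1 (hSsub hu)).2
  have hYle : Fintype.card Y ≤ ℓ * (Fintype.card X) ^ s := by
    calc Fintype.card Y ≤ ((Finset.powersetCard s (Finset.univ : Finset X)).biUnion
          (fun S => Finset.univ.filter fun v : Y => ∀ u ∈ S, (u, v) ∈ E)).card :=
          Finset.card_le_card hYsub
      _ ≤ ∑ S ∈ Finset.powersetCard s (Finset.univ : Finset X),
            (Finset.univ.filter fun v : Y => ∀ u ∈ S, (u, v) ∈ E).card :=
          Finset.card_biUnion_le
      _ ≤ ∑ _S ∈ Finset.powersetCard s (Finset.univ : Finset X), ℓ := by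
          apply Finset.sum_le_sum
          intro S hS
          exact hcommon S (Finset.mem_powersetCard.1 hS).2
      _ = (Fintype.card X).choose s * ℓ := by
          simp [Finset.card_powersetCard]
      _ ≤ (Fintype.card X) ^ s * ℓ :=
          Nat.mul_le_mul_right ℓ (Nat.choose_le_pow _ _)
      _ = ℓ * (Fintype.card X) ^ s := mul_comm _ _
  -- Step 3 : h ≤ |Y|
  have hhY : h ≤ Fintype.card Y := by
    obtain ⟨p, hp⟩ := hE
    calc h ≤ (Finset.univ.filter fun v : Y => (p.1, v) ∈ E).card := hdegX p.1
      _ ≤ Fintype.card Y := by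
          simpa using Finset.card_filter_le (Finset.univ : Finset Y) _
  -- Step 4 : γ * s ≤ |X| (real)
  have hXγ : γ * s ≤ (Fintype.card X : ℝ) := by
    by_contra hlt
    push_neg at hlt
    have h0 : (0:ℝ) ≤ γ * s := by positivity
    have hx : ((Fintype.card X : ℝ)) ^ s < (γ * s) ^ s := by
      apply pow_lt_pow_left₀ hlt (by positivity)
      omega
    have h1 : (h : ℝ) ≤ (ℓ : ℝ) * (Fintype.card X : ℝ) ^ s := by
      calc (h : ℝ) ≤ (Fintype.card Y : ℝ) := by exact_mod_cast hhY
        _ ≤ (ℓ : ℝ) * (Fintype.card X : ℝ) ^ s := by exact_mod_cast hYle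
    have h2 : (ℓ : ℝ) * (Fintype.card X : ℝ) ^ s < (ℓ : ℝ) * (γ * s) ^ s :=
      mul_lt_mul_of_pos_left hx (by exact_mod_cast hℓ)
    have h3 : (ℓ : ℝ) * (γ * s) ^ s = (ℓ : ℝ) * γ ^ s * (s : ℝ) ^ s := by
      rw [mul_pow]; ring
    linarith [hbound]
  -- Conclusion
  have hEcard : (h : ℝ) * (Fintype.card X : ℝ) ≤ (E.card : ℝ) := by
    exact_mod_cast hXcard
  calc γ * h * s = (h : ℝ) * (γ * s) := by ring
    _ ≤ (h : ℝ) * (Fintype.card X : ℝ) :=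
        mul_le_mul_of_nonneg_left hXγ (by positivity)
    _ ≤ (E.card : ℝ) := hEcard
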